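/- For every θ ∈ [0, π]: if r ∈ ℛ⁻ with r > 0, then Σ_{j=1}^{4} 2^{2(r−j)}·a_j⁻·(2cos θ)^{2j} ≤ (4cos²θ)^r; and if r ∈ ℛ⁺, then Σ_{j=1}^{4} 2^{2(r−j)}·a_j⁻·(2cos θ)^{2j} ≥ (4cos²θ)^r. -/

import Mathlib

noncomputable section

open Real Filter

def P1m (r κ η : ℝ) : ℝ := ((4 - r) * κ + (r - 2) * η) * κ ^ (r - 1) * η ^ 2

def P2m (r κ η : ℝ) : ℝ :=
  ((2 * r - 8) * κ ^ 2 + (1 - r) * κ * η + (1 - r) * η ^ 2) * κ ^ (r - 2) * η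

def P3m (r κ η : ℝ) : ℝ :=
  ((4 - r) * κ ^ 2 + (4 - r) * κ * η + 2 * (r - 1) * η ^ 2) * κ ^ (r - 2)

def P4m (r κ η : ℝ) : ℝ := ((r - 3) * κ + (1 - r) * η) * κ ^ (r - 2)

/-- `κ₋ = 1/4`. -/
def κm : ℝ := 1 / 4

/-- `η₋ = 3/4`. -/
def ηm : ℝ := 3 / 4

def a1m (r : ℝ) : ℝ := (P1m r κm ηm - P1m r ηm κm) / (κm - ηm) ^ 3

def a2m (r : ℝ) : ℝ := (P2m r κm ηm - P2m r ηm κm) / (κm - ηm) ^ 3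

def a3m (r : ℝ) : ℝ := (P3m r κm ηm - P3m r ηm κm) / (κm - ηm) ^ 3

def a4m (r : ℝ) : ℝ := (P4m r κm ηm - P4m r ηm κm) / (κm - ηm) ^ 3

/-- `ℛ⁻ = (0,1] ∪ [2,3] ∪ [4,∞)`. -/
def Rminus : Set ℝ := Set.Ioc 0 1 ∪ Set.Icc 2 3 ∪ Set.Ici 4

/-- `ℛ⁺ = [1,2] ∪ [3,4]`. -/
def Rplus : Set ℝ := Set.Icc 1 2 ∪ Set.Icc 3 4

/-! After pulling out `2 ^ (2r)` and putting `x = cos² θ`, the claim compares the quartic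
`Q = ∑ⱼ aⱼ⁻ Xʲ` with `x ^ r` for `x ≥ 0`. `Q` is the Hermite interpolant of `x ↦ x ^ r` at the
nodes `0, κ₋, κ₋, η₋, η₋`: it vanishes at `0` and matches value and slope at `κ₋` and `η₋`.
The Hermite remainder formula, obtained by applying Rolle's theorem five times to
`x ^ r - q(x)` where the quintic `q` also interpolates at `x`, gives for some `c > 0`
`x ^ r - Q(x) = r(r-1)(r-2)(r-3)(r-4) c ^ (r-5) / 5! · x (x-κ₋)² (x-η₋)²`,
and `r(r-1)(r-2)(r-3)(r-4)` is `≥ 0` on `ℛ⁻` and `≤ 0` on `ℛ⁺`. -/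

open Polynomial Set

theorem exists_finset_hasDerivAt_eq_zero {f f' : ℝ → ℝ} {s : Set ℝ} (hs : s.OrdConnected)
    (hfc : ContinuousOn f s) (hf : ∀ x ∈ interior s, HasDerivAt f (f' x) x)
    (Z : Finset ℝ) (hZs : ↑Z ⊆ s) (hZ : ∀ z ∈ Z, f z = 0) :
    ∃ W : Finset ℝ, Z.card ≤ W.card + 1 ∧ ↑W ⊆ interior s ∧ Disjoint W Z ∧
      ∀ w ∈ W, f' w = 0 := by
  -- Each zero of `f'` found lies below a point of `Z`, so the next one, found above `max Z`, is new.
  suffices ∃ W : Finset ℝ, Z.card ≤ W.card + 1 ∧ ↑W ⊆ interior s ∧ Disjoint W Z ∧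
      ∀ w ∈ W, (∃ z ∈ Z, w < z) ∧ f' w = 0 by
    obtain ⟨W, hcard, hWs, hWZ, hW⟩ := this
    exact ⟨W, hcard, hWs, hWZ, fun w hw => (hW w hw).2⟩
  induction Z using Finset.induction_on_max with
  | empty => exact ⟨∅, by simp⟩
  | insert a Z hlt ih =>
    have hZs' : ↑Z ⊆ s := fun z hz => hZs (Finset.mem_insert_of_mem hz)
    obtain ⟨W, hcard, hWs, hWZ, hW⟩ :=
      ih hZs' fun z hz => hZ z (Finset.mem_insert_of_mem hz)
    rcases Z.eq_empty_or_nonempty with rfl | hne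
    · exact ⟨∅, by simp⟩
    set m := Z.max' hne
    have hma : m < a := hlt m (Z.max'_mem hne)
    have hIcc : Icc m a ⊆ s :=
      hs.out (hZs' (Z.max'_mem hne)) (hZs (Finset.mem_insert_self a Z))
    have hIoo : Ioo m a ⊆ interior s :=
      interior_maximal (Ioo_subset_Icc_self.trans hIcc) isOpen_Ioo
    have hfma : f m = f a := (hZ m (Finset.mem_insert_of_mem (Z.max'_mem hne))).trans
      (hZ a (Finset.mem_insert_self a Z)).symm
    obtain ⟨c, hc, hfc'⟩ :=
      exists_hasDerivAt_eq_zero hma (hfc.mono hIcc) hfma fun x hx => hf x (hIoo hx)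
    have hW_lt : ∀ w ∈ W, w < m := fun w hw => by
      obtain ⟨z, hz, hwz⟩ := (hW w hw).1
      exact hwz.trans_le (Z.le_max' z hz)
    have hcW : c ∉ W := fun h => (hW_lt c h).not_gt hc.1
    refine ⟨insert c W, ?_, ?_, ?_, ?_⟩
    · rw [Finset.card_insert_of_notMem hcW, Finset.card_insert_of_notMem fun h => (hlt a h).false]
      omega
    · rw [Finset.coe_insert]
      exact Set.insert_subset (hIoo hc) hWs
    · have hcZ : c ∉ insert a Z := by
        simp only [Finset.mem_insert, not_or]
        exact ⟨hc.2.ne, fun h => (Z.le_max' c h).not_gt hc.1⟩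
      have haW : a ∉ W := fun h => (hW_lt a h).not_gt hma
      rw [Finset.disjoint_insert_left, Finset.disjoint_insert_right]
      exact ⟨hcZ, haW, hWZ⟩
    · intro w hw
      rcases Finset.mem_insert.1 hw with rfl | hw
      · exact ⟨⟨a, Finset.mem_insert_self a Z, hc.2⟩, hfc'⟩
      · obtain ⟨⟨z, hz, hwz⟩, hw0⟩ := hW w hw
        exact ⟨⟨z, Finset.mem_insert_of_mem hz, hwz⟩, hw0⟩

theorem exists_hasDerivAt_iterate_eq_zero {f : ℕ → ℝ → ℝ} {U : Set ℝ} (hU : IsOpen U)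
    (hU' : U.OrdConnected) {n : ℕ} (hf : ∀ k < n, ∀ x ∈ U, HasDerivAt (f k) (f (k + 1) x) x)
    {Z : Finset ℝ} (hZU : ↑Z ⊆ U) (hZ : n < Z.card) (hfZ : ∀ z ∈ Z, f 0 z = 0) :
    ∃ x ∈ U, f n x = 0 := by
  induction n generalizing f Z with
  | zero =>
    obtain ⟨z, hz⟩ := Finset.card_pos.1 hZ
    exact ⟨z, hZU hz, hfZ z hz⟩
  | succ n ih =>
    have hcont : ContinuousOn (f 0) U := fun x hx =>
      (hf 0 n.succ_pos x hx).continuousAt.continuousWithinAt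
    obtain ⟨W, hcard, hWU, -, hW⟩ := exists_finset_hasDerivAt_eq_zero hU' hcont
      (by rw [hU.interior_eq]; exact hf 0 n.succ_pos) Z hZU hfZ
    rw [hU.interior_eq] at hWU
    exact ih (f := fun k => f (k + 1)) (fun k hk => hf (k + 1) (by omega)) hWU (by omega) hW

/-- On `(0, ∞)`, the `k`-th derivative of `x ↦ x ^ r - q.eval x`
(`hasDerivAt_rpowSubEvalDeriv`). -/
def rpowSubEvalDeriv (r : ℝ) (q : ℝ[X]) (k : ℕ) (x : ℝ) : ℝ :=
  (descPochhammer ℝ k).eval r * x ^ (r - k) - (derivative^[k] q).eval x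

theorem hasDerivAt_rpowSubEvalDeriv (r : ℝ) (q : ℝ[X]) (k : ℕ) {x : ℝ} (hx : x ≠ 0) :
    HasDerivAt (rpowSubEvalDeriv r q k) (rpowSubEvalDeriv r q (k + 1) x) x := by
  have hpow := (Real.hasDerivAt_rpow_const (p := r - k) (Or.inl hx)).const_mul
    ((descPochhammer ℝ k).eval r)
  refine (hpow.sub ((derivative^[k] q).hasDerivAt x)).congr_deriv ?_
  rw [rpowSubEvalDeriv, descPochhammer_succ_eval, Function.iterate_succ_apply', Nat.cast_succ,
    sub_add_eq_sub_sub, mul_assoc]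

theorem iterate_derivative_eq_C_of_natDegree_le {R : Type*} [CommSemiring R] {p : R[X]} {n : ℕ}
    (hp : p.natDegree ≤ n) : derivative^[n] p = C ((n.factorial : R) * p.coeff n) := by
  ext m
  rw [coeff_iterate_derivative, coeff_C]
  rcases m with _ | m
  · simp [Nat.descFactorial_self, nsmul_eq_mul]
  · rw [coeff_eq_zero_of_natDegree_lt (by omega)]
    simp

def IsTangentToRpowAt (r : ℝ) (p : ℝ[X]) (a : ℝ) : Prop :=
  p.eval a = a ^ r ∧ p.derivative.eval a = r * a ^ (r - 1)

theorem rpowSubEvalDeriv_zero (r : ℝ) (q : ℝ[X]) (x : ℝ) :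
    rpowSubEvalDeriv r q 0 x = x ^ r - q.eval x := by
  simp [rpowSubEvalDeriv]

theorem rpowSubEvalDeriv_one (r : ℝ) (q : ℝ[X]) (x : ℝ) :
    rpowSubEvalDeriv r q 1 x = r * x ^ (r - 1) - q.derivative.eval x := by
  simp [rpowSubEvalDeriv]

theorem IsTangentToRpowAt.add_C_mul {r a : ℝ} {p w : ℝ[X]} (hp : IsTangentToRpowAt r p a)
    (hw : w.eval a = 0) (hw' : w.derivative.eval a = 0) (l : ℝ) :
    IsTangentToRpowAt r (p + C l * w) a := by
  constructor <;> simp [hp.1, hp.2, hw, hw']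

theorem exists_descPochhammer_mul_rpow_eq_coeff {r κ η x : ℝ} {q : ℝ[X]} (hr : 0 < r)
    (hκ : 0 < κ) (hη : 0 < η) (hx : 0 < x) (hκη : κ ≠ η) (hxκ : x ≠ κ) (hxη : x ≠ η)
    (hq : q.natDegree ≤ 5) (hq0 : q.eval 0 = 0) (hqx : q.eval x = x ^ r)
    (hqκ : IsTangentToRpowAt r q κ) (hqη : IsTangentToRpowAt r q η) :
    ∃ c > 0, (descPochhammer ℝ 5).eval r * c ^ (r - 5) = 120 * q.coeff 5 := by
  set G := rpowSubEvalDeriv r q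
  have hG_deriv (k : ℕ) : ∀ y ∈ Ioi (0 : ℝ), HasDerivAt (G k) (G (k + 1) y) y :=
    fun y hy => hasDerivAt_rpowSubEvalDeriv r q k (ne_of_gt hy)
  have hG0_cont : ContinuousOn (G 0) (Ici 0) := by
    rw [show G 0 = fun y => y ^ r - q.eval y from funext (rpowSubEvalDeriv_zero r q)]
    exact ((Real.continuous_rpow_const hr.le).sub q.continuous).continuousOn
  have hG0 : ∀ z ∈ ({0, κ, η, x} : Finset ℝ), G 0 z = 0 := by
    simp only [Finset.mem_insert, Finset.mem_singleton]
    rintro z (rfl | rfl | rfl | rfl) <;> simp only [G, rpowSubEvalDeriv_zero, sub_eq_zero]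
    · rw [hq0, Real.zero_rpow hr.ne']
    · exact hqκ.1.symm
    · exact hqη.1.symm
    · exact hqx.symm
  have hcardZ : ({0, κ, η, x} : Finset ℝ).card = 4 := by
    rw [Finset.card_insert_of_notMem (by simp [hκ.ne, hη.ne, hx.ne]),
      Finset.card_insert_of_notMem (by simp [hκη, Ne.symm hxκ]),
      Finset.card_insert_of_notMem (by simp [Ne.symm hxη]), Finset.card_singleton]
  -- The zeros of `G 1` found by Rolle avoid the double nodes `κ, η`, which are zeros of `G 1` too.
  obtain ⟨W, hcardW, hW, hWZ, hGW⟩ :=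
    exists_finset_hasDerivAt_eq_zero ordConnected_Ici hG0_cont
      (by rw [interior_Ici]; exact hG_deriv 0) {0, κ, η, x}
    (by simp [Set.insert_subset_iff, hx.le, hκ.le, hη.le]) hG0
  rw [interior_Ici] at hW
  have hκW : κ ∉ W := fun h => Finset.disjoint_left.1 hWZ h (by simp)
  have hηW : η ∉ W := fun h => Finset.disjoint_left.1 hWZ h (by simp)
  obtain ⟨c, hc, hGc⟩ := exists_hasDerivAt_iterate_eq_zero (f := fun k => G (k + 1)) (n := 4)
    isOpen_Ioi ordConnected_Ioi (fun k _ => hG_deriv (k + 1)) (Z := insert κ (insert η W))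
    (by simp [Set.insert_subset_iff, hκ, hη, hW])
    (by rw [Finset.card_insert_of_notMem (by simp [hκη, hκW]), Finset.card_insert_of_notMem hηW]
        omega)
    (by simp only [Finset.mem_insert]
        rintro z (rfl | rfl | hz)
        · simp [G, rpowSubEvalDeriv_one, hqκ.2]
        · simp [G, rpowSubEvalDeriv_one, hqη.2]
        · exact hGW z hz)
  refine ⟨c, hc, ?_⟩
  simp only [G, rpowSubEvalDeriv, iterate_derivative_eq_C_of_natDegree_le hq, eval_C] at hGc
  norm_num at hGc
  linarith

theorem exists_rpow_sub_eval_eq_remainder {r κ η x : ℝ} {p : ℝ[X]} (hr : 0 < r) (hκ : 0 < κ)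
    (hη : 0 < η) (hκη : κ ≠ η) (hp : p.natDegree ≤ 4) (hp0 : p.eval 0 = 0)
    (hpκ : IsTangentToRpowAt r p κ) (hpη : IsTangentToRpowAt r p η) (hx : 0 ≤ x) :
    ∃ c > 0, x ^ r - p.eval x =
      (descPochhammer ℝ 5).eval r * c ^ (r - 5) / 120 * (x * (x - κ) ^ 2 * (x - η) ^ 2) := by
  by_cases hxZ : x = 0 ∨ x = κ ∨ x = η
  · refine ⟨1, one_pos, ?_⟩
    rcases hxZ with rfl | rfl | rfl
    · simp [Real.zero_rpow hr.ne', hp0]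
    · simp [hpκ.1]
    · simp [hpη.1]
  simp only [not_or] at hxZ
  obtain ⟨hx0, hxκ, hxη⟩ := hxZ
  set w : ℝ[X] := X * (X - C κ) ^ 2 * (X - C η) ^ 2 with hw
  have hw_eval (y : ℝ) : w.eval y = y * (y - κ) ^ 2 * (y - η) ^ 2 := by simp [w]
  have hwx : w.eval x ≠ 0 := by
    rw [hw_eval]
    exact mul_ne_zero (mul_ne_zero hx0 (pow_ne_zero _ (sub_ne_zero.2 hxκ)))
      (pow_ne_zero _ (sub_ne_zero.2 hxη))
  have hw5 : w.natDegree = 5 := by rw [hw]; compute_degree!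
  have hw_monic : w.Monic := by rw [hw]; monicity!
  -- `w` vanishes to second order at `κ, η`, so adding `C l * w` keeps both tangencies,
  -- and `l` is chosen to make the sum agree with `x ↦ x ^ r` at `x` as well.
  set l := (x ^ r - p.eval x) / w.eval x with hl
  have hq5 : (p + C l * w).natDegree ≤ 5 :=
    (natDegree_add_le _ _).trans
      (max_le (hp.trans (by norm_num)) ((natDegree_C_mul_le _ _).trans hw5.le))
  have hq_coeff : (p + C l * w).coeff 5 = l := by
    rw [coeff_add, coeff_C_mul, coeff_eq_zero_of_natDegree_lt (by omega), ← hw5,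
      hw_monic.coeff_natDegree, zero_add, mul_one]
  obtain ⟨c, hc, hcl⟩ := exists_descPochhammer_mul_rpow_eq_coeff hr hκ hη
    (lt_of_le_of_ne hx (Ne.symm hx0)) hκη hxκ hxη hq5 (by simp [hp0, w])
    (by rw [eval_add, eval_mul, eval_C, hl, div_mul_cancel₀ _ hwx]; ring)
    (hpκ.add_C_mul (by simp [w]) (by simp [w, derivative_mul, derivative_pow]) l)
    (hpη.add_C_mul (by simp [w]) (by simp [w, derivative_mul, derivative_pow]) l)
  refine ⟨c, hc, ?_⟩
  rw [← hw_eval, ← div_mul_cancel₀ (x ^ r - p.eval x) hwx, ← hl, hcl, hq_coeff]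
  ring

def rankinQuartic (r : ℝ) : ℝ[X] :=
  C (a1m r) * X + C (a2m r) * X ^ 2 + C (a3m r) * X ^ 3 + C (a4m r) * X ^ 4

theorem natDegree_rankinQuartic_le (r : ℝ) : (rankinQuartic r).natDegree ≤ 4 := by
  unfold rankinQuartic; compute_degree

theorem eval_zero_rankinQuartic (r : ℝ) : (rankinQuartic r).eval 0 = 0 := by
  simp [rankinQuartic]

theorem isTangentToRpowAt_rankinQuartic (r : ℝ) {a : ℝ} (ha : a = κm ∨ a = ηm) :
    IsTangentToRpowAt r (rankinQuartic r) a := by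
  have h1 : (1 / 4 : ℝ) ^ (r - 1) = (1 / 4) ^ r * 4 := by
    rw [Real.rpow_sub (by norm_num), Real.rpow_one]; ring
  have h2 : (1 / 4 : ℝ) ^ (r - 2) = (1 / 4) ^ r * 16 := by
    rw [Real.rpow_sub (by norm_num), Real.rpow_two]; ring
  have h3 : (3 / 4 : ℝ) ^ (r - 1) = (3 / 4) ^ r * (4 / 3) := by
    rw [Real.rpow_sub (by norm_num), Real.rpow_one]; ring
  have h4 : (3 / 4 : ℝ) ^ (r - 2) = (3 / 4) ^ r * (16 / 9) := by
    rw [Real.rpow_sub (by norm_num), Real.rpow_two]; ring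
  rcases ha with rfl | rfl <;> constructor <;>
    simp only [rankinQuartic, a1m, a2m, a3m, a4m, P1m, P2m, P3m, P4m, κm, ηm, h1, h2, h3, h4,
      eval_add, eval_mul, eval_C, eval_X, eval_pow, eval_zero, eval_one, derivative_add,
      derivative_mul, derivative_C, derivative_X, derivative_X_pow] <;>
    ring

theorem descPochhammer_eval_five (r : ℝ) :
    (descPochhammer ℝ 5).eval r = r * (r - 1) * (r - 2) * (r - 3) * (r - 4) := by
  simp only [descPochhammer_succ_eval, descPochhammer_zero, eval_one]
  push_cast
  ring

theorem descPochhammer_eval_five_nonneg_of_mem_Rminus {r : ℝ} (hr : r ∈ Rminus) :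
    0 ≤ (descPochhammer ℝ 5).eval r := by
  rw [descPochhammer_eval_five]
  rcases hr with (⟨h0, h1⟩ | ⟨h2, h3⟩) | h4
  · rw [show r * (r - 1) * (r - 2) * (r - 3) * (r - 4)
        = r * (1 - r) * (2 - r) * (3 - r) * (4 - r) by ring]
    apply_rules [mul_nonneg] <;> linarith
  · rw [show r * (r - 1) * (r - 2) * (r - 3) * (r - 4)
        = r * (r - 1) * (r - 2) * (3 - r) * (4 - r) by ring]
    apply_rules [mul_nonneg] <;> linarith
  · have h4 : (4 : ℝ) ≤ r := h4
    apply_rules [mul_nonneg] <;> linarith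

theorem descPochhammer_eval_five_nonpos_of_mem_Rplus {r : ℝ} (hr : r ∈ Rplus) :
    (descPochhammer ℝ 5).eval r ≤ 0 := by
  rw [descPochhammer_eval_five, ← neg_nonneg]
  rcases hr with ⟨h1, h2⟩ | ⟨h3, h4⟩
  · rw [show -(r * (r - 1) * (r - 2) * (r - 3) * (r - 4))
        = r * (r - 1) * (2 - r) * (3 - r) * (4 - r) by ring]
    apply_rules [mul_nonneg] <;> linarith
  · rw [show -(r * (r - 1) * (r - 2) * (r - 3) * (r - 4))
        = r * (r - 1) * (r - 2) * (r - 3) * (4 - r) by ring]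
    apply_rules [mul_nonneg] <;> linarith

theorem exists_rpow_sub_eval_rankinQuartic_eq {r x : ℝ} (hr : 0 < r) (hx : 0 ≤ x) :
    ∃ c > 0, x ^ r - (rankinQuartic r).eval x =
      (descPochhammer ℝ 5).eval r * c ^ (r - 5) / 120 * (x * (x - κm) ^ 2 * (x - ηm) ^ 2) :=
  exists_rpow_sub_eval_eq_remainder hr (by norm_num [κm]) (by norm_num [ηm])
    (by norm_num [κm, ηm]) (natDegree_rankinQuartic_le r) (eval_zero_rankinQuartic r)
    (isTangentToRpowAt_rankinQuartic r (.inl rfl))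
    (isTangentToRpowAt_rankinQuartic r (.inr rfl)) hx

theorem rankinQuartic_eval_le_rpow {r x : ℝ} (hr : 0 < r)
    (hD : 0 ≤ (descPochhammer ℝ 5).eval r) (hx : 0 ≤ x) : (rankinQuartic r).eval x ≤ x ^ r := by
  obtain ⟨c, hc, h⟩ := exists_rpow_sub_eval_rankinQuartic_eq hr hx
  refine sub_nonneg.1 (h ▸ mul_nonneg ?_ ?_)
  · exact div_nonneg (mul_nonneg hD (Real.rpow_nonneg hc.le _)) (by norm_num)
  · exact mul_nonneg (mul_nonneg hx (sq_nonneg _)) (sq_nonneg _)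

theorem rpow_le_rankinQuartic_eval {r x : ℝ} (hr : 0 < r)
    (hD : (descPochhammer ℝ 5).eval r ≤ 0) (hx : 0 ≤ x) : x ^ r ≤ (rankinQuartic r).eval x := by
  obtain ⟨c, hc, h⟩ := exists_rpow_sub_eval_rankinQuartic_eq hr hx
  refine sub_nonpos.1 (h ▸ mul_nonpos_of_nonpos_of_nonneg ?_ ?_)
  · exact div_nonpos_of_nonpos_of_nonneg
      (mul_nonpos_of_nonpos_of_nonneg hD (Real.rpow_nonneg hc.le _)) (by norm_num)
  · exact mul_nonneg (mul_nonneg hx (sq_nonneg _)) (sq_nonneg _)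

theorem two_rpow_sum_eq_two_rpow_mul_eval_rankinQuartic (r y : ℝ) :
    (2 : ℝ) ^ (2 * (r - 1)) * a1m r * (2 * y) ^ 2
        + (2 : ℝ) ^ (2 * (r - 2)) * a2m r * (2 * y) ^ 4
        + (2 : ℝ) ^ (2 * (r - 3)) * a3m r * (2 * y) ^ 6
        + (2 : ℝ) ^ (2 * (r - 4)) * a4m r * (2 * y) ^ 8
      = (2 : ℝ) ^ (2 * r) * (rankinQuartic r).eval (y ^ 2) := by
  have h (j : ℕ) : (2 : ℝ) ^ (2 * (r - j)) = 2 ^ (2 * r) / 2 ^ (2 * j) := by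
    rw [← Real.rpow_sub_natCast two_ne_zero]; push_cast; ring_nf
  have h1 := h 1; have h2 := h 2; have h3 := h 3; have h4 := h 4
  norm_num at h1 h2 h3 h4
  simp only [h1, h2, h3, h4, rankinQuartic, eval_add, eval_mul, eval_C, eval_X, eval_pow]
  ring

theorem four_mul_rpow (r y : ℝ) (hy : 0 ≤ y) : (4 * y) ^ r = (2 : ℝ) ^ (2 * r) * y ^ r := by
  rw [Real.mul_rpow (by norm_num) hy, Real.rpow_mul (by norm_num)]
  norm_num

theorem pointwise_comparison_minus_general (θ r : ℝ) :
    (r ∈ Rminus → 0 < r →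
      (2 : ℝ) ^ (2 * (r - 1)) * a1m r * (2 * Real.cos θ) ^ 2
          + (2 : ℝ) ^ (2 * (r - 2)) * a2m r * (2 * Real.cos θ) ^ 4
          + (2 : ℝ) ^ (2 * (r - 3)) * a3m r * (2 * Real.cos θ) ^ 6
          + (2 : ℝ) ^ (2 * (r - 4)) * a4m r * (2 * Real.cos θ) ^ 8
        ≤ (4 * Real.cos θ ^ 2) ^ r) ∧
    (r ∈ Rplus →
      (4 * Real.cos θ ^ 2) ^ r
        ≤ (2 : ℝ) ^ (2 * (r - 1)) * a1m r * (2 * Real.cos θ) ^ 2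
            + (2 : ℝ) ^ (2 * (r - 2)) * a2m r * (2 * Real.cos θ) ^ 4
            + (2 : ℝ) ^ (2 * (r - 3)) * a3m r * (2 * Real.cos θ) ^ 6
            + (2 : ℝ) ^ (2 * (r - 4)) * a4m r * (2 * Real.cos θ) ^ 8) := by
  rw [two_rpow_sum_eq_two_rpow_mul_eval_rankinQuartic, four_mul_rpow r _ (sq_nonneg _)]
  refine ⟨fun hr hr0 => ?_, fun hr => ?_⟩ <;> gcongr
  · exact rankinQuartic_eval_le_rpow hr0 (descPochhammer_eval_five_nonneg_of_mem_Rminus hr)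
      (sq_nonneg _)
  · have hr0 : 0 < r := by rcases hr with ⟨h, -⟩ | ⟨h, -⟩ <;> linarith
    exact rpow_le_rankinQuartic_eval hr0 (descPochhammer_eval_five_nonpos_of_mem_Rplus hr)
      (sq_nonneg _)

/-- Pointwise comparison in Rankin's method: for `θ ∈ [0, π]`,
`Σ_{j=1}^{4} 2^{2(r−j)}·a_j⁻·(2cos θ)^{2j}` is at most `(4cos²θ)^r` when `r ∈ ℛ⁻`
and at least `(4cos²θ)^r` when `r ∈ ℛ⁺`. -/
theorem pointwise_comparison_minus (θ r : ℝ) (hθ : θ ∈ Set.Icc 0 π) :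
    (r ∈ Rminus → 0 < r →
      (2 : ℝ) ^ (2 * (r - 1)) * a1m r * (2 * Real.cos θ) ^ 2
          + (2 : ℝ) ^ (2 * (r - 2)) * a2m r * (2 * Real.cos θ) ^ 4
          + (2 : ℝ) ^ (2 * (r - 3)) * a3m r * (2 * Real.cos θ) ^ 6
          + (2 : ℝ) ^ (2 * (r - 4)) * a4m r * (2 * Real.cos θ) ^ 8
        ≤ (4 * Real.cos θ ^ 2) ^ r) ∧
    (r ∈ Rplus →
      (4 * Real.cos θ ^ 2) ^ r
        ≤ (2 : ℝ) ^ (2 * (r - 1)) * a1m r * (2 * Real.cos θ) ^ 2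
            + (2 : ℝ) ^ (2 * (r - 2)) * a2m r * (2 * Real.cos θ) ^ 4
            + (2 : ℝ) ^ (2 * (r - 3)) * a3m r * (2 * Real.cos θ) ^ 6
            + (2 : ℝ) ^ (2 * (r - 4)) * a4m r * (2 * Real.cos θ) ^ 8) :=
  pointwise_comparison_minus_general θ r
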